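/- arXiv:2307.01011 — 2 statements merged into one kernel-verified Lean document; each statement's English description precedes it below -/
import Mathlib

section
/- For every real s ≥ 0, every μ > 0 and p > 1, the pointwise Young-type inequality (μ+1) p s^p ≤ μ p s^{p+1} + ((μ+1)^{p+1}/μ^p) (p/(p+1))^{p+1} holds. -/
theorem stmt_11 (s μ p : ℝ) (hs : 0 ≤ s) (hμ : 0 < μ) (hp : 1 < p) :
    (μ + 1) * p * s ^ p
      ≤ μ * p * s ^ (p + 1) + ((μ + 1) ^ (p + 1) / μ ^ p) * (p / (p + 1)) ^ (p + 1) := by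
  have hp0 : 0 < p := lt_trans one_pos hp
  have hp1 : (0:ℝ) < p + 1 := by linarith
  have hμp : 0 < μ * (p + 1) := mul_pos hμ hp1
  set t : ℝ := (μ * (p + 1)) ^ (p / (p + 1)) with ht
  have htpos : 0 < t := Real.rpow_pos_of_pos hμp _
  have hsp : 0 ≤ s ^ p := Real.rpow_nonneg hs p
  have ha : 0 ≤ s ^ p * t := mul_nonneg hsp htpos.le
  have hb : 0 ≤ (μ + 1) * p / t := by positivity
  have hconj : ((p + 1) / p).HolderConjugate (p + 1) := by
    rw [Real.holderConjugate_iff]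
    constructor
    · rw [lt_div_iff₀ hp0]; linarith
    · field_simp
  have key := Real.young_inequality_of_nonneg ha hb hconj
  have hab : s ^ p * t * ((μ + 1) * p / t) = (μ + 1) * p * s ^ p := by
    field_simp
  have haq : (s ^ p * t) ^ ((p + 1) / p) / ((p + 1) / p) = μ * p * s ^ (p + 1) := by
    rw [Real.mul_rpow hsp htpos.le]
    rw [← Real.rpow_mul hs, ht, ← Real.rpow_mul hμp.le]
    rw [show p * ((p + 1) / p) = p + 1 by field_simp,
        show p / (p + 1) * ((p + 1) / p) = 1 by field_simp]
    rw [Real.rpow_one]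
    field_simp
  have hbq : ((μ + 1) * p / t) ^ (p + 1) / (p + 1)
      = ((μ + 1) ^ (p + 1) / μ ^ p) * (p / (p + 1)) ^ (p + 1) := by
    have hμ1 : (0:ℝ) ≤ (μ + 1) * p := by positivity
    rw [Real.div_rpow hμ1 htpos.le, ht, ← Real.rpow_mul hμp.le,
        show p / (p + 1) * (p + 1) = p by field_simp,
        Real.mul_rpow (by positivity : (0:ℝ) ≤ μ + 1) hp0.le,
        Real.mul_rpow hμ.le hp1.le,
        Real.div_rpow hp0.le hp1.le]
    have h1 : (p + 1) ^ (p + 1) = (p + 1) ^ p * (p + 1) :=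
      Real.rpow_add_one hp1.ne' p
    rw [h1]
    have h2 : (0:ℝ) < μ ^ p := Real.rpow_pos_of_pos hμ p
    have h3 : (0:ℝ) < (p + 1) ^ p := Real.rpow_pos_of_pos hp1 p
    field_simp
  rw [hab, haq, hbq] at key
  exact key
end

section
/- Let n ≥ 2 be an integer and γ > 2 − 2/n. Then there exist real numbers p, q > 1, with p and q arbitrarily large, satisfying: p > max{γ − (n−2)/(nq), 2q(n−2)/(2q+n−2)}; (q(p−γ+1)/(q−1)) · (n − (nq−n+2)/(q(p−γ+1))) / ((p+γ−1)n + 2 − n) < 1; and 1/q > (2/(p+γ−1)) · ((p+γ−1)/2 − (p+γ−1)(2q+n−2)/(4nq)) / ((p+γ−1)/2 + 1/n − 1/2). -/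
set_option maxHeartbeats 1000000 in
theorem stmt_12 (n : ℕ) (hn : 2 ≤ n) (γ : ℝ) (hγ : γ > 2 - 2 / (n : ℝ)) :
    ∀ N : ℝ, ∃ p q : ℝ, p > N ∧ q > N ∧ 1 < p ∧ 1 < q ∧
      p > max (γ - ((n : ℝ) - 2) / ((n : ℝ) * q))
              (2 * q * ((n : ℝ) - 2) / (2 * q + (n : ℝ) - 2)) ∧
      (q * (p - γ + 1) / (q - 1)) *
          (((n : ℝ) - ((n : ℝ) * q - (n : ℝ) + 2) / (q * (p - γ + 1))) /
            ((p + γ - 1) * (n : ℝ) + 2 - (n : ℝ))) < 1 ∧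
      1 / q > (2 / (p + γ - 1)) *
          (((p + γ - 1) / 2 - (p + γ - 1) * (2 * q + (n : ℝ) - 2) / (4 * (n : ℝ) * q)) /
            ((p + γ - 1) / 2 + 1 / (n : ℝ) - 1 / 2)) := by
  intro N
  set n' : ℝ := (n : ℝ) with hn'def
  have hn2 : (2 : ℝ) ≤ n' := by rw [hn'def]; exact_mod_cast hn
  have hn'pos : 0 < n' := by linarith
  set A : ℝ := 2 * n' * (γ - 1) + 2 with hAdef
  set B : ℝ := 2 * (n' - 1) with hBdef
  have hB2 : (2 : ℝ) ≤ B := by rw [hBdef]; linarith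
  have hBpos : 0 < B := by linarith
  have h2n : n' * (2 / n') = 2 := by
    have : n' ≠ 0 := by linarith
    field_simp
  have hAB : B < A := by
    have h := (mul_lt_mul_iff_right₀ hn'pos).mpr hγ
    rw [hAdef, hBdef]; nlinarith [h, h2n]
  have hApos : 0 < A := lt_trans hBpos hAB
  have hA2 : (2 : ℝ) < A := lt_of_le_of_lt hB2 hAB
  set M : ℝ := max N 1 with hMdef
  have hMN : N ≤ M := le_max_left _ _
  have hM1 : (1 : ℝ) ≤ M := le_max_right _ _
  set p : ℝ := M * A + |γ| + A + n' + 10 with hpdef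
  have habs1 : -|γ| ≤ γ := neg_abs_le γ
  have habs2 : γ ≤ |γ| := le_abs_self γ
  have hMA : M ≤ M * A := by nlinarith
  have hpN : N < p := by rw [hpdef]; nlinarith [abs_nonneg γ]
  have hp1 : 1 < p := by rw [hpdef]; nlinarith [abs_nonneg γ]
  set s : ℝ := p + γ - 1 with hsdef
  have hs9 : M * A + A + n' + 9 ≤ s := by rw [hsdef, hpdef]; linarith
  have hMA2 : (2 : ℝ) ≤ M * A := by nlinarith
  have hspos : 0 < s := by linarith
  have hABpos : 0 < 2 * A * B := by positivity
  set q : ℝ := n' * s * (A + B) / (2 * A * B) with hqdef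
  clear_value n'
  have hqmul : q * (2 * A * B) = n' * s * (A + B) := by
    rw [hqdef]; exact div_mul_cancel₀ _ hABpos.ne'
  clear_value A B M p s q
  have hnspos : 0 < n' * s := mul_pos hn'pos hspos
  have hABd : 0 < n' * s * (A - B) := mul_pos hnspos (sub_pos.mpr hAB)
  have hq1 : n' * s < q * A := by
    have he : q * A - n' * s = n' * s * (A - B) / (2 * B) := by
      field_simp
      first | linear_combination hqmul | linear_combination -hqmul | ring
    linarith [he, div_pos hABd (by linarith : (0:ℝ) < 2 * B)]
  have hq2 : q * B < n' * s := by
    have he : n' * s - q * B = n' * s * (A - B) / (2 * A) := by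
      field_simp
      first | linear_combination hqmul | linear_combination -hqmul | ring
    linarith [he, div_pos hABd (by linarith : (0:ℝ) < 2 * A)]
  have hq2M : 2 * M < q := by
    have hns : 2 * (M * A + A + n' + 9) ≤ n' * s := by
      nlinarith [mul_nonneg (sub_nonneg.mpr hn2) hspos.le]
    have h' : (2 * M + 2) * A < q * A := by nlinarith
    have := (mul_lt_mul_iff_left₀ hApos).mp h'
    linarith
  have hqN : N < q := by linarith
  have hq1' : 1 < q := by linarith
  have hqpos : 0 < q := by linarith
  refine ⟨p, q, hpN, hqN, hp1, hq1', ?_, ?_, ?_⟩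
  · rw [gt_iff_lt, max_lt_iff]
    constructor
    · have h1 : 0 ≤ (n' - 2) / (n' * q) :=
        div_nonneg (by linarith) (by positivity)
      have : γ < p := by rw [hpdef]; nlinarith
      linarith
    · have hden : 0 < 2 * q + n' - 2 := by linarith
      rw [div_lt_iff₀ hden]
      have hpn : n' - 2 < p := by rw [hpdef]; nlinarith [abs_nonneg γ]
      have hppos : 0 < p := by linarith
      nlinarith [mul_pos hqpos (sub_pos.mpr hpn), mul_nonneg hppos.le (by linarith : (0:ℝ) ≤ n' - 2)]
  · have ht : 0 < p - γ + 1 := by rw [hpdef]; nlinarith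
    have hD : 0 < (p + γ - 1) * n' + 2 - n' := by nlinarith [hs9, hMA2]
    have hq1pos : 0 < q - 1 := by linarith
    have key2 : q * (p - γ + 1) / (q - 1) *
          ((n' - (n' * q - n' + 2) / (q * (p - γ + 1))) /
            ((p + γ - 1) * n' + 2 - n')) =
        (q * (p - γ + 1) * n' - (n' * q - n' + 2)) /
          ((q - 1) * ((p + γ - 1) * n' + 2 - n')) := by
      field_simp
    rw [key2, div_lt_one (mul_pos hq1pos hD)]
    have hq1e : n' * (p + γ - 1) < q * (2 * n' * (γ - 1) + 2) := by
      rw [← hAdef, ← hsdef]; exact hq1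
    nlinarith [hq1e]
  · have hD : 0 < n' * (p + γ - 1) + 2 - n' := by nlinarith [hs9, hMA2]
    have hs1 : (1 : ℝ) ≤ s := by linarith
    have hE : 0 < (p + γ - 1) / 2 + 1 / n' - 1 / 2 := by
      have : 0 < 1 / n' := by positivity
      rw [← hsdef]; linarith
    have key3 : (2 / (p + γ - 1)) *
          (((p + γ - 1) / 2 - (p + γ - 1) * (2 * q + n' - 2) / (4 * n' * q)) /
            ((p + γ - 1) / 2 + 1 / n' - 1 / 2)) =
        (2 * n' * q - (2 * q + n' - 2)) / (q * (n' * (p + γ - 1) + 2 - n')) := by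
      have hsne : p + γ - 1 ≠ 0 := by rw [← hsdef]; exact hspos.ne'
      have e1 : (p + γ - 1) / 2 + 1 / n' - 1 / 2 =
          (n' * (p + γ - 1) + 2 - n') / (2 * n') := by
        field_simp
      have e2 : (p + γ - 1) / 2 - (p + γ - 1) * (2 * q + n' - 2) / (4 * n' * q) =
          (p + γ - 1) * (2 * n' * q - (2 * q + n' - 2)) / (4 * n' * q) := by
        field_simp
        ring
      rw [e1, e2, div_div_div_comm]
      field_simp
      ring
    rw [gt_iff_lt, key3, div_lt_div_iff₀ (mul_pos hqpos hD) hqpos]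
    have hq2e : q * (2 * (n' - 1)) < n' * (p + γ - 1) := by
      rw [← hBdef, ← hsdef]; exact hq2
    nlinarith [mul_lt_mul_of_pos_left hq2e hqpos]
end
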